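/- (Self-improvement of I_α^D under normalization) Let 0 < β ≤ α < mn, 0 < p₀ < n/α, and f⃗ nonnegative with ‖f⃗‖_{M^{P⃗,p₀}} = 1. Then for every x ∈ ℝⁿ, I_α^D(f⃗)(x) ≲ I_β^D(f⃗)(x)^{(n−αp₀)/(n−βp₀)}. -/

import Mathlib

open MeasureTheory ENNReal

noncomputable section

variable {n : ℕ}

/-- Axis-parallel cube with lower corner `a` and side length `r` (half-open). -/
def cube (a : Fin n → ℝ) (r : ℝ) : Set (Fin n → ℝ) :=
  {y | ∀ i, a i ≤ y i ∧ y i < a i + r}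

/-- The dyadic cube `2^{-k}(m + [0,1)^n)`. -/
def dyadicCube (k : ℤ) (mv : Fin n → ℤ) : Set (Fin n → ℝ) :=
  cube (fun i => (mv i : ℝ) * (2 : ℝ) ^ (-k)) ((2 : ℝ) ^ (-k))

/-- The concentric triple `3Q` of the cube with corner `a` and side `r`. -/
def tripleCube (a : Fin n → ℝ) (r : ℝ) : Set (Fin n → ℝ) :=
  cube (fun i => a i - r) (3 * r)

/-- The Morrey norm `‖f‖_{M^{p,p₀}}`. -/
def morreyNorm (p p0 : ℝ) (f : (Fin n → ℝ) → ℝ) : ℝ≥0∞ :=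
  ⨆ (a : Fin n → ℝ) (r : ℝ) (_ : 0 < r),
    volume (cube a r) ^ (1 / p0 - 1 / p) *
      (∫⁻ x in cube a r, ENNReal.ofReal |f x| ^ p) ^ (1 / p)

/-- The product Morrey norm `‖f⃗‖_{M^{P⃗,p₀}}`. -/
def prodMorreyNorm {m : ℕ} (P : Fin m → ℝ) (p p0 : ℝ)
    (f : Fin m → (Fin n → ℝ) → ℝ) : ℝ≥0∞ :=
  ⨆ (a : Fin n → ℝ) (r : ℝ) (_ : 0 < r),
    volume (cube a r) ^ (1 / p0 - 1 / p) *
      ∏ j, (∫⁻ x in cube a r, ENNReal.ofReal |f j x| ^ P j) ^ (1 / P j)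

/-- The Radon–Morrey norm `‖g‖_{M_μ^{q,q₀}}`. -/
def radonMorreyNorm (μ : Measure (Fin n → ℝ)) (q q0 : ℝ)
    (g : (Fin n → ℝ) → ℝ≥0∞) : ℝ≥0∞ :=
  ⨆ (a : Fin n → ℝ) (r : ℝ) (_ : 0 < r),
    volume (cube a r) ^ (1 / q0 - 1 / q) * (∫⁻ x in cube a r, g x ^ q ∂μ) ^ (1 / q)

/-- The growth norm `‖μ‖_β := sup_Q μ(Q)/ℓ_Q^β`. -/
def measureGrowthNorm (μ : Measure (Fin n → ℝ)) (β : ℝ) : ℝ≥0∞ :=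
  ⨆ (a : Fin n → ℝ) (r : ℝ) (_ : 0 < r), μ (cube a r) / ENNReal.ofReal r ^ β

/-- The `m`-sublinear fractional maximal operator `𝔐_α`. -/
def fracMaximal {m : ℕ} (α : ℝ) (f : Fin m → (Fin n → ℝ) → ℝ)
    (x : Fin n → ℝ) : ℝ≥0∞ :=
  ⨆ (a : Fin n → ℝ) (r : ℝ) (_ : 0 < r) (_ : x ∈ cube a r),
    ENNReal.ofReal r ^ (α - (m : ℝ) * n) *
      ∏ j, ∫⁻ y in cube a r, ENNReal.ofReal |f j y|

/-- The dyadic `m`-sublinear fractional maximal operator `𝔐_α^𝒟`. -/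
def dyadicFracMaximal {m : ℕ} (α : ℝ) (f : Fin m → (Fin n → ℝ) → ℝ)
    (x : Fin n → ℝ) : ℝ≥0∞ :=
  ⨆ (k : ℤ) (mv : Fin n → ℤ) (_ : x ∈ dyadicCube k mv),
    ENNReal.ofReal ((2 : ℝ) ^ (-k)) ^ (α - (m : ℝ) * n) *
      ∏ j, ∫⁻ y in dyadicCube k mv, ENNReal.ofReal |f j y|

/-- The dyadic `m`-linear fractional integral operator `ℑ_α^𝒟`. -/
def dyadicFracIntegral {m : ℕ} (α : ℝ) (f : Fin m → (Fin n → ℝ) → ℝ)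
    (x : Fin n → ℝ) : ℝ≥0∞ :=
  ∑' qk : ℤ × (Fin n → ℤ),
    (dyadicCube qk.1 qk.2).indicator
      (fun _ => ENNReal.ofReal ((2 : ℝ) ^ (-qk.1)) ^ (α - (m : ℝ) * n) *
        ∏ j, ∫⁻ y in dyadicCube qk.1 qk.2, ENNReal.ofReal |f j y|) x

/-- The `m`-linear fractional integral operator `ℑ_α` (with Euclidean distances). -/
def fracIntegral {m : ℕ} (α : ℝ) (f : Fin m → (Fin n → ℝ) → ℝ)
    (x : Fin n → ℝ) : ℝ≥0∞ :=
  ∫⁻ y : Fin m → Fin n → ℝ,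
    (∏ j, ENNReal.ofReal |f j (y j)|) /
      ENNReal.ofReal ((∑ j, Real.sqrt (∑ i, (x i - y j i) ^ 2)) ^ ((m : ℝ) * n - α))

/-!
For each `k : ℤ` exactly one dyadic cube `Q_k`, of side `ℓ_k = 2^{-k}`, contains `x`, so `I_α f x`
is a series over `k` whose `k`-th term `T_k = ℓ_k^{α-mn} ∏_j ∫_{Q_k} f_j` admits two bounds:
`T_k ≤ ℓ_k^{α-β} I_β f x`, since `ℓ_k^{β-α} T_k` is itself a term of the series for `I_β f x`,
and `T_k ≤ ℓ_k^{α-n/p₀}`, by Hölder's inequality on each factor and the Morrey normalisation.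
With `δ = α - β` and `γ = n/p₀ - α`, using the first bound on the small cubes and the second on
the large ones, split where the two bounds balance, leaves two geometric series, each
`≲ (I_β f x)^{γ/(δ+γ)}`, and `γ/(δ+γ) = (n-αp₀)/(n-βp₀)`.
-/

theorem ENNReal.prod_rpow_eq_rpow_sum {ι : Type*} (s : Finset ι) {x : ℝ≥0∞} (hx : x ≠ 0)
    (hx' : x ≠ ∞) (c : ι → ℝ) : ∏ i ∈ s, x ^ c i = x ^ (∑ i ∈ s, c i) := by
  induction s using Finset.cons_induction with
  | empty => simp
  | cons i s hi ih => rw [Finset.prod_cons, Finset.sum_cons, ih, ← ENNReal.rpow_add _ _ hx hx']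

theorem lintegral_le_lintegral_rpow_mul_measure_univ {α : Type*} [MeasurableSpace α]
    (μ : Measure α) {p : ℝ} (hp : 1 < p) (g : α → ℝ≥0∞) :
    ∫⁻ x, g x ∂μ ≤ (∫⁻ x, g x ^ p ∂μ) ^ (1 / p) * μ Set.univ ^ (1 - 1 / p) := by
  obtain ⟨g', hg'_meas, hg'_le, hg'_eq⟩ := exists_measurable_le_lintegral_eq μ g
  have hHolder := ENNReal.lintegral_mul_le_Lp_mul_Lq μ (Real.HolderConjugate.conjExponent hp)
    hg'_meas.aemeasurable (aemeasurable_const (b := (1 : ℝ≥0∞)))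
  simp only [Pi.mul_apply, mul_one, ENNReal.one_rpow, lintegral_one] at hHolder
  rw [hg'_eq]
  calc ∫⁻ x, g' x ∂μ ≤ _ := hHolder
    _ ≤ _ := by
      rw [Real.conjExponent, one_div_div, ← one_sub_div (by linarith)]
      gcongr
      exact hg'_le _

theorem ENNReal.tsum_int_le_of_le_rpow {b : ℝ≥0∞} (hb : 1 < b) (hb' : b ≠ ∞) {δ γ : ℝ}
    (hδ : 0 < δ) (hγ : 0 < γ) {a : ℤ → ℝ≥0∞} {B : ℝ≥0∞}
    (h_decay : ∀ k : ℤ, a k ≤ b ^ (-(k * δ)) * B) (h_growth : ∀ k : ℤ, a k ≤ b ^ (k * γ)) :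
    ∑' k, a k ≤ ((1 - b ^ (-δ))⁻¹ + (1 - b ^ (-γ))⁻¹) * B ^ (γ / (δ + γ)) := by
  rcases eq_or_ne B 0 with rfl | hB0
  · simp_all
  have hC0 : (1 - b ^ (-δ))⁻¹ + (1 - b ^ (-γ))⁻¹ ≠ 0 := by simp [ENNReal.sub_eq_top_iff]
  rcases eq_or_ne B ∞ with rfl | hBtop
  · rw [ENNReal.top_rpow_of_pos (by positivity), ENNReal.mul_top hC0]
    exact le_top
  have hb0 : b ≠ 0 := (zero_lt_one.trans hb).ne'
  set s := B ^ (δ + γ)⁻¹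
  have hs0 : s ≠ 0 := (ENNReal.rpow_pos (pos_iff_ne_zero.2 hB0) hBtop).ne'
  have hstop : s ≠ ∞ := ENNReal.rpow_ne_top_of_nonneg (by positivity) hBtop
  have hBs : B = s ^ (δ + γ) := by
    rw [← ENNReal.rpow_mul, inv_mul_cancel₀ (by positivity), ENNReal.rpow_one]
  -- split the sum where the two bounds balance: `b ^ k₀ ≤ B ^ (δ + γ)⁻¹ < b ^ (k₀ + 1)`
  obtain ⟨k₀, hk₀_le, hk₀_lt⟩ := ENNReal.exists_mem_Ico_zpow hs0 hstop hb hb'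
  have tail : ∀ j : ℕ, a (j + (k₀ + 1)) ≤ s ^ γ * (b ^ (-δ)) ^ j := by
    intro j
    have key : b ^ (-(((j + (k₀ + 1) : ℤ) : ℝ) * δ)) = (b ^ (k₀ + 1)) ^ (-δ) * (b ^ (-δ)) ^ j := by
      rw [← ENNReal.rpow_intCast, ← ENNReal.rpow_mul, ← ENNReal.rpow_natCast, ← ENNReal.rpow_mul,
        ← ENNReal.rpow_add _ _ hb0 hb']
      push_cast; ring_nf
    have hsδ : (b ^ (k₀ + 1)) ^ (-δ) ≤ s ^ (-δ) := by
      rw [ENNReal.rpow_neg, ENNReal.rpow_neg]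
      exact ENNReal.inv_le_inv.2 (ENNReal.rpow_le_rpow hk₀_lt.le hδ.le)
    calc a (j + (k₀ + 1)) ≤ (b ^ (k₀ + 1)) ^ (-δ) * (b ^ (-δ)) ^ j * s ^ (δ + γ) := by
          rw [← key, ← hBs]; exact h_decay _
      _ ≤ s ^ (-δ) * (b ^ (-δ)) ^ j * s ^ (δ + γ) := by gcongr
      _ = s ^ γ * (b ^ (-δ)) ^ j := by
          rw [mul_right_comm, ← ENNReal.rpow_add _ _ hs0 hstop, neg_add_cancel_left, mul_comm]
  have head : ∀ j : ℕ, a (-(j + 1) + (k₀ + 1)) ≤ s ^ γ * (b ^ (-γ)) ^ j := by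
    intro j
    have key : b ^ (((-(j + 1) + (k₀ + 1) : ℤ) : ℝ) * γ) = (b ^ k₀) ^ γ * (b ^ (-γ)) ^ j := by
      rw [← ENNReal.rpow_intCast, ← ENNReal.rpow_mul, ← ENNReal.rpow_natCast, ← ENNReal.rpow_mul,
        ← ENNReal.rpow_add _ _ hb0 hb']
      push_cast; ring_nf
    calc a (-(j + 1) + (k₀ + 1)) ≤ (b ^ k₀) ^ γ * (b ^ (-γ)) ^ j := by
          rw [← key]; exact h_growth _
      _ ≤ s ^ γ * (b ^ (-γ)) ^ j := by gcongr
  have hsγ : s ^ γ = B ^ (γ / (δ + γ)) := by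
    rw [← ENNReal.rpow_mul, inv_mul_eq_div]
  calc ∑' k, a k = ∑' k, a (k + (k₀ + 1)) := ((Equiv.addRight (k₀ + 1)).tsum_eq a).symm
    _ = ∑' j : ℕ, a (j + (k₀ + 1)) + ∑' j : ℕ, a (-(j + 1) + (k₀ + 1)) := by
        rw [← ENNReal.tsum_add]
        exact (tsum_nat_add_neg_add_one (f := fun k => a (k + (k₀ + 1))) ENNReal.summable).symm
    _ ≤ ∑' j : ℕ, s ^ γ * (b ^ (-δ)) ^ j + ∑' j : ℕ, s ^ γ * (b ^ (-γ)) ^ j :=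
        add_le_add (ENNReal.tsum_le_tsum tail) (ENNReal.tsum_le_tsum head)
    _ = ((1 - b ^ (-δ))⁻¹ + (1 - b ^ (-γ))⁻¹) * B ^ (γ / (δ + γ)) := by
        rw [ENNReal.tsum_mul_left, ENNReal.tsum_mul_left, ENNReal.tsum_geometric,
          ENNReal.tsum_geometric, hsγ]
        ring

theorem volume_cube (a : Fin n → ℝ) (r : ℝ) : volume (cube a r) = ENNReal.ofReal r ^ n := by
  have h : cube a r = Set.univ.pi fun i => Set.Ico (a i) (a i + r) := by
    ext y; simp [cube, Set.mem_pi]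
  simp [h, volume_pi_pi]

theorem prod_lintegral_cube_le_of_prodMorreyNorm_le_one {m : ℕ} {P : Fin m → ℝ}
    (hP : ∀ j, 1 < P j) {p p0 : ℝ} (hp : 1 / p = ∑ j, 1 / P j) {f : Fin m → (Fin n → ℝ) → ℝ}
    (hf : prodMorreyNorm P p p0 f ≤ 1) (a : Fin n → ℝ) {r : ℝ} (hr : 0 < r) :
    ∏ j, ∫⁻ y in cube a r, ENNReal.ofReal |f j y| ≤ volume (cube a r) ^ ((m : ℝ) - 1 / p0) := by
  set V := volume (cube a r)
  have hV0 : V ≠ 0 := by simp [V, volume_cube, hr]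
  have hVtop : V ≠ ∞ := by simp [V, volume_cube]
  set N : Fin m → ℝ≥0∞ := fun j => (∫⁻ x in cube a r, ENNReal.ofReal |f j x| ^ P j) ^ (1 / P j)
  have hMorrey : V ^ (1 / p0 - 1 / p) * ∏ j, N j ≤ 1 := by
    refine le_trans ?_ hf
    unfold prodMorreyNorm
    exact le_iSup_of_le a <| le_iSup_of_le r <| le_iSup_of_le hr le_rfl
  calc ∏ j, ∫⁻ y in cube a r, ENNReal.ofReal |f j y|
      ≤ ∏ j, N j * V ^ (1 - 1 / P j) := Finset.prod_le_prod' fun j _ => by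
        simpa only [Measure.restrict_apply_univ] using
          lintegral_le_lintegral_rpow_mul_measure_univ (volume.restrict (cube a r)) (hP j)
            fun y => ENNReal.ofReal |f j y|
    _ = V ^ (1 / p0 - 1 / p) * (∏ j, N j) * V ^ ((m : ℝ) - 1 / p0) := by
        rw [Finset.prod_mul_distrib, ENNReal.prod_rpow_eq_rpow_sum _ hV0 hVtop, mul_assoc,
          mul_left_comm, ← ENNReal.rpow_add _ _ hV0 hVtop]
        congr 2
        rw [Finset.sum_sub_distrib, ← hp]
        simp only [Finset.sum_const, Finset.card_univ, Fintype.card_fin, nsmul_eq_mul, mul_one]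
        ring
    _ ≤ V ^ ((m : ℝ) - 1 / p0) := mul_le_of_le_one_left zero_le hMorrey

def dyadicIndex (k : ℤ) (x : Fin n → ℝ) : Fin n → ℤ := fun i => ⌊x i * 2 ^ k⌋

theorem mem_dyadicCube_iff {k : ℤ} {mv : Fin n → ℤ} {x : Fin n → ℝ} :
    x ∈ dyadicCube k mv ↔ dyadicIndex k x = mv := by
  have h2k : (0 : ℝ) < 2 ^ k := by positivity
  simp only [dyadicCube, cube, Set.mem_ofPred_eq, funext_iff, dyadicIndex, Int.floor_eq_iff,
    zpow_neg]
  refine forall_congr' fun i => and_congr (mul_inv_le_iff₀ h2k) ?_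
  rw [← add_one_mul, lt_mul_inv_iff₀ h2k]

def dyadicTerm {m : ℕ} (α : ℝ) (f : Fin m → (Fin n → ℝ) → ℝ) (k : ℤ) (mv : Fin n → ℤ) :
    ℝ≥0∞ :=
  ENNReal.ofReal ((2 : ℝ) ^ (-k)) ^ (α - (m : ℝ) * n) *
    ∏ j, ∫⁻ y in dyadicCube k mv, ENNReal.ofReal |f j y|

theorem dyadicFracIntegral_eq_tsum_dyadicTerm {m : ℕ} (α : ℝ)
    (f : Fin m → (Fin n → ℝ) → ℝ) (x : Fin n → ℝ) :
    dyadicFracIntegral α f x = ∑' k : ℤ, dyadicTerm α f k (dyadicIndex k x) := by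
  rw [dyadicFracIntegral, ENNReal.tsum_prod']
  refine tsum_congr fun k => (tsum_eq_single (dyadicIndex k x) fun mv hmv => ?_).trans ?_
  · exact Set.indicator_of_notMem (fun hx => hmv (mem_dyadicCube_iff.1 hx).symm) _
  · exact Set.indicator_of_mem (mem_dyadicCube_iff.2 rfl) _

theorem ofReal_two_zpow_neg_rpow (k : ℤ) (e : ℝ) :
    ENNReal.ofReal ((2 : ℝ) ^ (-k)) ^ e = 2 ^ (-(k * e)) := by
  rw [← Real.rpow_intCast, ← ENNReal.ofReal_rpow_of_pos two_pos, ENNReal.ofReal_ofNat,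
    ← ENNReal.rpow_mul]
  push_cast
  ring_nf

theorem dyadicTerm_le_mul_dyadicFracIntegral {m : ℕ} (α β : ℝ)
    (f : Fin m → (Fin n → ℝ) → ℝ) (k : ℤ) (x : Fin n → ℝ) :
    dyadicTerm α f k (dyadicIndex k x) ≤ 2 ^ (-(k * (α - β))) * dyadicFracIntegral β f x := by
  have hℓ0 : ENNReal.ofReal ((2 : ℝ) ^ (-k)) ≠ 0 := by simp; positivity
  have hsplit : dyadicTerm α f k (dyadicIndex k x) =
      ENNReal.ofReal ((2 : ℝ) ^ (-k)) ^ (α - β) * dyadicTerm β f k (dyadicIndex k x) := by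
    rw [dyadicTerm, dyadicTerm, ← mul_assoc, ← ENNReal.rpow_add _ _ hℓ0 ENNReal.ofReal_ne_top]
    ring_nf
  rw [hsplit, ofReal_two_zpow_neg_rpow, dyadicFracIntegral_eq_tsum_dyadicTerm]
  gcongr
  exact ENNReal.le_tsum k

theorem dyadicTerm_le_of_prodMorreyNorm_le_one {m : ℕ} {P : Fin m → ℝ} (hP : ∀ j, 1 < P j)
    {p p0 : ℝ} (hp : 1 / p = ∑ j, 1 / P j) (α : ℝ) {f : Fin m → (Fin n → ℝ) → ℝ}
    (hf : prodMorreyNorm P p p0 f ≤ 1) (k : ℤ) (mv : Fin n → ℤ) :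
    dyadicTerm α f k mv ≤ 2 ^ (k * (n / p0 - α)) := by
  have hℓ : (0 : ℝ) < 2 ^ (-k) := by positivity
  calc dyadicTerm α f k mv
      ≤ ENNReal.ofReal ((2 : ℝ) ^ (-k)) ^ (α - (m : ℝ) * n) *
          volume (dyadicCube k mv) ^ ((m : ℝ) - 1 / p0) := by
        rw [dyadicTerm]
        gcongr
        exact prod_lintegral_cube_le_of_prodMorreyNorm_le_one hP hp hf _ hℓ
    _ = 2 ^ (k * (n / p0 - α)) := by
        rw [dyadicCube, volume_cube, ← ENNReal.rpow_natCast, ← ENNReal.rpow_mul,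
          ofReal_two_zpow_neg_rpow, ofReal_two_zpow_neg_rpow,
          ← ENNReal.rpow_add _ _ two_ne_zero ENNReal.ofNat_ne_top]
        ring_nf

theorem statement11_general (m : ℕ)
    (P : Fin m → ℝ) (hP : ∀ j, 1 < P j) (p p0 α β : ℝ)
    (hp : 1 / p = ∑ j, 1 / P j)
    (hβ : 0 < β) (hβα : β ≤ α)
    (hp0 : 0 < p0) (hp0n : p0 < n / α) :
    ∃ C : ℝ≥0∞, 0 < C ∧ C < ∞ ∧
      ∀ f : Fin m → (Fin n → ℝ) → ℝ, (∀ j x, 0 ≤ f j x) →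
        prodMorreyNorm P p p0 f = 1 →
        ∀ x : Fin n → ℝ,
          dyadicFracIntegral α f x ≤
            C * dyadicFracIntegral β f x ^ ((n - α * p0) / (n - β * p0)) := by
  have hαp0 : α * p0 < n := (lt_div_iff₀' (hβ.trans_le hβα)).1 hp0n
  rcases hβα.eq_or_lt with rfl | hβα
  · refine ⟨1, one_pos, ENNReal.one_lt_top, fun f _ _ x => ?_⟩
    rw [div_self (sub_pos.2 hαp0).ne', ENNReal.rpow_one, one_mul]
  have hδ : 0 < α - β := sub_pos.2 hβα
  have hγ : 0 < n / p0 - α := by rw [sub_pos, lt_div_iff₀ hp0]; linarith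
  have hθ : (n - α * p0) / (n - β * p0) = (n / p0 - α) / (α - β + (n / p0 - α)) := by
    field_simp
    ring
  refine ⟨(1 - 2 ^ (-(α - β)))⁻¹ + (1 - 2 ^ (-(n / p0 - α)))⁻¹, ?_, ?_,
    fun f _ hf x => ?_⟩
  · simp [ENNReal.sub_eq_top_iff]
  · have hlt : ∀ {e : ℝ}, 0 < e → (1 - (2 : ℝ≥0∞) ^ (-e))⁻¹ < ∞ := fun he =>
      ENNReal.inv_lt_top.2 <| tsub_pos_of_lt <|
        ENNReal.rpow_lt_one_of_one_lt_of_neg one_lt_two (neg_lt_zero.2 he)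
    exact ENNReal.add_lt_top.2 ⟨hlt hδ, hlt hγ⟩
  rw [dyadicFracIntegral_eq_tsum_dyadicTerm, hθ]
  exact ENNReal.tsum_int_le_of_le_rpow one_lt_two ENNReal.ofNat_ne_top hδ hγ
    (fun k => dyadicTerm_le_mul_dyadicFracIntegral α β f k x)
    (fun k => dyadicTerm_le_of_prodMorreyNorm_le_one hP hp α hf.le k _)

theorem statement11 (hn : 0 < n) (m : ℕ) (hm : 0 < m)
    (P : Fin m → ℝ) (hP : ∀ j, 1 < P j) (p p0 α β : ℝ)
    (hp : 1 / p = ∑ j, 1 / P j)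
    (hβ : 0 < β) (hβα : β ≤ α) (hα : α < (m : ℝ) * n)
    (hp0 : 0 < p0) (hp0n : p0 < n / α) :
    ∃ C : ℝ≥0∞, 0 < C ∧ C < ∞ ∧
      ∀ f : Fin m → (Fin n → ℝ) → ℝ, (∀ j x, 0 ≤ f j x) →
        prodMorreyNorm P p p0 f = 1 →
        ∀ x : Fin n → ℝ,
          dyadicFracIntegral α f x ≤
            C * dyadicFracIntegral β f x ^ ((n - α * p0) / (n - β * p0)) :=
  statement11_general m P hP p p0 α β hp hβ hβα hp0 hp0n
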